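/- arXiv:2310.02483 — 8 statements merged into one kernel-verified Lean document; each statement's English description precedes it below -/
import Mathlib

section
/- For every integer n ≥ 1, the identity ∑_{q=0}^{n-1} 2^q · C(2n−1−q, q) = (4^n − 1)/3 holds; equivalently, 3·∑_{q=0}^{n-1} 2^q · C(2n−1−q, q) = 4^n − 1. -/
/-!
The sum is a weighted sum along a shallow diagonal of Pascal's triangle,
`s m = ∑_{i + j = m} 2^i C(j, i)` at `m = 2n - 1`. Pascal's rule gives the Jacobsthal
recurrence `s (m + 2) = s (m + 1) + 2 s m`, with `s 0 = s 1 = 1`, whose solution is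
`3 s m = 2^(m+1) + (-1)^m`.
-/

open Finset

section

variable {R : Type*} [Semiring R]

def shallowDiagonalSum (x : R) (m : ℕ) : R :=
  ∑ p ∈ antidiagonal m, x ^ p.1 * p.2.choose p.1

theorem shallowDiagonalSum_add_two (x : R) (m : ℕ) :
    shallowDiagonalSum x (m + 2) = shallowDiagonalSum x (m + 1) + x * shallowDiagonalSum x m := by
  simp only [shallowDiagonalSum, Nat.antidiagonal_succ_succ', Nat.antidiagonal_succ, sum_cons,
    sum_map, mul_sum, Function.Embedding.coe_prodMap, Function.Embedding.coeFn_mk,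
    Function.Embedding.refl_apply, Prod.map_fst, Prod.map_snd, Nat.succ_eq_add_one,
    Nat.choose_succ_succ, Nat.choose_zero_right, Nat.choose_zero_succ, Nat.cast_add, Nat.cast_one,
    Nat.cast_zero, pow_zero, pow_succ', mul_one, mul_zero, mul_add, mul_assoc, sum_add_distrib,
    zero_add]
  abel

theorem sum_range_eq_shallowDiagonalSum (x : R) {m n : ℕ} (hmn : m < 2 * n) :
    ∑ q ∈ range n, x ^ q * ((m - q).choose q : R) = shallowDiagonalSum x m := by
  rw [shallowDiagonalSum,
    Nat.sum_antidiagonal_eq_sum_range_succ (fun i j => x ^ i * (j.choose i : R))]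
  -- the terms with `m < 2 * q` vanish
  have extend : ∀ k ≤ n + m + 1, m < 2 * k →
      ∑ q ∈ range k, x ^ q * ((m - q).choose q : R) =
        ∑ q ∈ range (n + m + 1), x ^ q * ((m - q).choose q : R) := by
    intro k hkN hk
    refine sum_subset (range_subset_range.mpr hkN) fun q _ hq => ?_
    have hq : k ≤ q := by simpa only [mem_range, not_lt] using hq
    rw [Nat.choose_eq_zero_of_lt (by omega), Nat.cast_zero, mul_zero]
  rw [extend n (by omega) hmn, extend (m + 1) (by omega) (by omega)]

end

theorem three_mul_shallowDiagonalSum_two (m : ℕ) :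
    3 * shallowDiagonalSum (2 : ℤ) m = 2 ^ (m + 1) + (-1) ^ m := by
  induction m using Nat.twoStepInduction with
  | zero => decide
  | one => decide
  | more m ih₀ ih₁ =>
    rw [shallowDiagonalSum_add_two]
    linear_combination ih₁ + 2 * ih₀

theorem sum_two_pow_mul_choose_general (n : ℕ) :
    3 * ∑ q ∈ Finset.range n, 2 ^ q * Nat.choose (2 * n - 1 - q) q = 4 ^ n - 1 := by
  rcases n.eq_zero_or_pos with rfl | hn
  · simp
  have key := three_mul_shallowDiagonalSum_two (2 * n - 1)
  rw [← sum_range_eq_shallowDiagonalSum _ (by omega : 2 * n - 1 < 2 * n),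
    Nat.sub_add_cancel (by omega), pow_mul, Odd.neg_one_pow ⟨n - 1, by omega⟩] at key
  zify [Nat.one_le_pow n 4 (by norm_num)]
  linear_combination key

/-- Lemma 2.2 (first identity): for every `n ≥ 1`,
`3 * ∑_{q=0}^{n-1} 2^q * C(2n-1-q, q) = 4^n - 1`. -/
theorem sum_two_pow_mul_choose (n : ℕ) (hn : 1 ≤ n) :
    3 * ∑ q ∈ Finset.range n, 2 ^ q * Nat.choose (2 * n - 1 - q) q = 4 ^ n - 1 :=
  sum_two_pow_mul_choose_general n
end

section
/- For every integer n ≥ 1, the identity ∑_{q=0}^{n} 2^q · C(2n−q, q) = (2·4^n + 1)/3 holds; equivalently, 3·∑_{q=0}^{n} 2^q · C(2n−q, q) = 2·4^n + 1. -/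
/-!
The sums `S m = ∑ q, x ^ q * C(m - q, q)` along the shallow diagonals of Pascal's triangle satisfy
`S (m + 2) = S (m + 1) + x * S m` by Pascal's rule. For `x = 2` the characteristic roots are `2`
and `-1`, so `3 * S m = 2 ^ (m + 1) + (-1) ^ m`; the theorem is the case `m = 2 * n`, where the
terms with `q > n` vanish.
-/

open Finset

def diagChooseSum {R : Type*} [CommSemiring R] (x : R) (m : ℕ) : R :=
  ∑ p ∈ antidiagonal m, x ^ p.1 * p.2.choose p.1

section CommSemiring

variable {R : Type*} [CommSemiring R]

theorem diagChooseSum_add_two (x : R) (m : ℕ) :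
    diagChooseSum x (m + 2) = diagChooseSum x (m + 1) + x * diagChooseSum x m := by
  simp only [diagChooseSum, Nat.antidiagonal_succ_succ', Nat.antidiagonal_succ, sum_cons, sum_map,
    Function.Embedding.coe_prodMap, Function.Embedding.coeFn_mk, Prod.map_fst, Prod.map_snd,
    Function.Embedding.refl_apply, Nat.succ_eq_add_one, Nat.choose_succ_succ',
    Nat.choose_zero_right, Nat.choose_zero_succ, Nat.cast_add, Nat.cast_zero, mul_zero, pow_succ',
    mul_add, sum_add_distrib, mul_sum, mul_assoc]
  abel

theorem diagChooseSum_eq_sum_range (x : R) (m : ℕ) :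
    diagChooseSum x m = ∑ q ∈ range (m + 1), x ^ q * (m - q).choose q :=
  Nat.sum_antidiagonal_eq_sum_range_succ (fun i j => x ^ i * j.choose i) m

theorem sum_range_pow_mul_choose_sub_eq_diagChooseSum (x : R) {m k : ℕ} (hk : k ≤ m)
    (hm : m ≤ 2 * k + 1) :
    ∑ q ∈ range (k + 1), x ^ q * (m - q).choose q = diagChooseSum x m := by
  rw [diagChooseSum_eq_sum_range]
  refine sum_subset (range_subset_range.2 (by omega)) fun q hqm hqk => ?_
  rw [mem_range] at hqm hqk
  rw [Nat.choose_eq_zero_of_lt (by omega), Nat.cast_zero, mul_zero]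

end CommSemiring

theorem three_mul_diagChooseSum_two (m : ℕ) :
    3 * diagChooseSum (2 : ℤ) m = 2 ^ (m + 1) + (-1) ^ m := by
  induction m using Nat.twoStepInduction with
  | zero => decide
  | one => decide
  | more m ih₀ ih₁ =>
    rw [diagChooseSum_add_two, mul_add, ih₁, mul_left_comm, ih₀]
    ring

theorem sum_two_pow_mul_choose'_general (n : ℕ) :
    3 * ∑ q ∈ Finset.range (n + 1), 2 ^ q * Nat.choose (2 * n - q) q = 2 * 4 ^ n + 1 := by
  have h := three_mul_diagChooseSum_two (2 * n)
  rw [← sum_range_pow_mul_choose_sub_eq_diagChooseSum (2 : ℤ) (by omega : n ≤ 2 * n) (by omega),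
    (even_two_mul n).neg_one_pow, pow_succ', pow_mul] at h
  exact_mod_cast h

/-- Lemma 2.2 (second identity): for every `n ≥ 1`,
`3 * ∑_{q=0}^{n} 2^q * C(2n-q, q) = 2 * 4^n + 1`. -/
theorem sum_two_pow_mul_choose' (n : ℕ) (hn : 1 ≤ n) :
    3 * ∑ q ∈ Finset.range (n + 1), 2 ^ q * Nat.choose (2 * n - q) q = 2 * 4 ^ n + 1 :=
  sum_two_pow_mul_choose'_general n
end

section
/- For every integer n ≥ 1, the identity ∑_{q=0}^{n-1} q · 2^q · C(2n−1−q, q) = (2/27)·((3n−2)·4^n − 6n + 2) holds; equivalently, 27·∑_{q=0}^{n-1} q · 2^q · C(2n−1−q, q) = 2·((3n−2)·4^n − 6n + 2). -/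
/-!
Write `D_a(m) = ∑_{i+j=m} a_j C(i, j)` for the shallow-diagonal sums of Pascal's triangle weighted
by `a`. Pascal's rule gives `D_a(m+2) = D_a(m+1) + D_{a(·+1)}(m)`. For `a_j = 2^j` this is the
Jacobsthal recurrence, whence `3 D = 2^(m+1) + (-1)^m`; for `a_j = j 2^j` the shifted weight is
`2 a_j + 2 · 2^j`, and the resulting inhomogeneous recurrence is solved by
`27 D = (6m - 2) 2^m + (6m + 2) (-1)^m`. The theorem is the case `m = 2n - 1`.
-/

open Finset

section DiagonalChooseSum

variable {R : Type*} [CommSemiring R]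

def diagonalChooseSum (a : ℕ → R) (m : ℕ) : R :=
  ∑ p ∈ antidiagonal m, a p.2 * p.1.choose p.2

theorem diagonalChooseSum_add (a b : ℕ → R) (m : ℕ) :
    diagonalChooseSum (fun q ↦ a q + b q) m = diagonalChooseSum a m + diagonalChooseSum b m := by
  simp only [diagonalChooseSum, add_mul, sum_add_distrib]

theorem diagonalChooseSum_const_mul (c : R) (a : ℕ → R) (m : ℕ) :
    diagonalChooseSum (fun q ↦ c * a q) m = c * diagonalChooseSum a m := by
  simp only [diagonalChooseSum, mul_sum, mul_assoc]

theorem diagonalChooseSum_add_two (a : ℕ → R) (m : ℕ) :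
    diagonalChooseSum a (m + 2) =
      diagonalChooseSum a (m + 1) + diagonalChooseSum (fun q ↦ a (q + 1)) m := by
  have h : ∀ p ∈ antidiagonal m, a (p.2 + 1) * (p.1 + 1).choose (p.2 + 1) =
      a (p.2 + 1) * p.1.choose p.2 + a (p.2 + 1) * p.1.choose (p.2 + 1) := by
    intro p _
    rw [Nat.choose_succ_succ, Nat.cast_add, mul_add]
  simp only [diagonalChooseSum]
  rw [Nat.sum_antidiagonal_succ', Nat.sum_antidiagonal_succ, Nat.sum_antidiagonal_succ',
    sum_congr rfl h, sum_add_distrib]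
  simp only [Nat.choose_zero_right, Nat.choose_zero_succ, Nat.cast_zero, mul_zero, zero_add]
  ring

theorem diagonalChooseSum_eq_sum_range (a : ℕ → R) {m n : ℕ} (hn : n ≤ m + 1) (hm : m < 2 * n) :
    diagonalChooseSum a m = ∑ q ∈ range n, a q * (m - q).choose q := by
  rw [diagonalChooseSum, ← Nat.sum_antidiagonal_swap, Nat.sum_antidiagonal_eq_sum_range_succ_mk]
  simp only [Prod.swap_prod_mk]
  refine (sum_subset (range_subset_range.2 hn) fun q _ hq ↦ ?_).symm
  rw [mem_range, not_lt] at hq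
  rw [Nat.choose_eq_zero_of_lt (by omega), Nat.cast_zero, mul_zero]

end DiagonalChooseSum

theorem diagonalChooseSum_two_pow (m : ℕ) :
    3 * diagonalChooseSum (fun q ↦ (2 : ℤ) ^ q) m = 2 ^ (m + 1) + (-1) ^ m := by
  induction m using Nat.twoStepInduction with
  | zero => decide
  | one => decide
  | more m ih₀ ih₁ =>
    have h : diagonalChooseSum (fun q ↦ (2 : ℤ) ^ (q + 1)) m =
        2 * diagonalChooseSum (fun q ↦ (2 : ℤ) ^ q) m := by
      simp only [pow_succ', diagonalChooseSum_const_mul]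
    rw [diagonalChooseSum_add_two, h]
    linear_combination ih₁ + 2 * ih₀

theorem diagonalChooseSum_mul_two_pow (m : ℕ) :
    27 * diagonalChooseSum (fun q ↦ (q : ℤ) * 2 ^ q) m =
      (6 * m - 2) * 2 ^ m + (6 * m + 2) * (-1) ^ m := by
  induction m using Nat.twoStepInduction with
  | zero => decide
  | one => decide
  | more m ih₀ ih₁ =>
    have h : diagonalChooseSum (fun q ↦ ((q + 1 : ℕ) : ℤ) * 2 ^ (q + 1)) m =
        2 * diagonalChooseSum (fun q ↦ (q : ℤ) * 2 ^ q) m +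
          2 * diagonalChooseSum (fun q ↦ (2 : ℤ) ^ q) m := by
      rw [← diagonalChooseSum_const_mul, ← diagonalChooseSum_const_mul, ← diagonalChooseSum_add]
      congr 1
      ext q
      push_cast
      ring
    rw [diagonalChooseSum_add_two, h]
    push_cast at ih₁ ⊢
    linear_combination ih₁ + 2 * ih₀ + 18 * diagonalChooseSum_two_pow m

theorem sum_mul_two_pow_mul_choose_general (n : ℕ) :
    27 * ∑ q ∈ Finset.range n, (q : ℤ) * 2 ^ q * (Nat.choose (2 * n - 1 - q) q : ℤ)
      = 2 * ((3 * (n : ℤ) - 2) * 4 ^ n - 6 * (n : ℤ) + 2) := by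
  rcases n with _ | k
  · simp
  rw [show 2 * (k + 1) - 1 = 2 * k + 1 by omega,
    ← diagonalChooseSum_eq_sum_range _ (by omega) (by omega),
    diagonalChooseSum_mul_two_pow]
  have h4 : (4 : ℤ) ^ (k + 1) = 2 * 2 ^ (2 * k + 1) := by
    rw [show (4 : ℤ) = 2 ^ 2 by norm_num, ← pow_mul]
    ring
  rw [h4, (odd_two_mul_add_one k).neg_one_pow]
  push_cast
  ring

/-- Lemma 2.3 (first identity): for every `n ≥ 1`,
`27 * ∑_{q=0}^{n-1} q * 2^q * C(2n-1-q, q) = 2 * ((3n-2) * 4^n - 6n + 2)`. -/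
theorem sum_mul_two_pow_mul_choose (n : ℕ) (hn : 1 ≤ n) :
    27 * ∑ q ∈ Finset.range n, (q : ℤ) * 2 ^ q * (Nat.choose (2 * n - 1 - q) q : ℤ)
      = 2 * ((3 * (n : ℤ) - 2) * 4 ^ n - 6 * (n : ℤ) + 2) :=
  sum_mul_two_pow_mul_choose_general n
end

section
/- For every integer k ≥ 2, the identity ∑_{l=0}^{k-2} 2l · 2^{k−l−2} · C(k+l−1, 2l) = (2/27)·((3k−2)·4^{k−1} − 15k + 14) holds; equivalently, 27·∑_{l=0}^{k-2} 2l · 2^{k−l−2} · C(k+l−1, 2l) = 2·((3k−2)·4^{k−1} − 15k + 14). (This sum is the total number of sign changes, summed over all two-bridge knots with crossing number c = 2k.) -/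
/-!
Index the summands by `(j, i)` with `i + j = n`, so that `C(n + j, 2j) x^(n-j)` becomes
`C(2j + i, 2j) x^i` (homogenised Morgan–Voyce polynomials). Pascal's rule couples the sums `E n`
with even lower index `2j` and `O n` with odd lower index `2j + 1` through
`E (n+1) = x E n + O n` and `O (n+1) = E (n+1) + x O n`; at `x = 2` the transfer matrix has
eigenvalues `1` and `4`, whence closed forms in `4^n`. Weighting the summands by `j` gives the
same system plus the unweighted `O n` as a forcing term (the weight shifts from `j + 1` to `j`),
which produces the `n 4^n` terms. The sign-change sum is the weighted even sum at `n = k - 1`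
minus its `i = 0` term.
-/

open Finset

section ChooseSums

variable {R : Type*} [CommSemiring R]

def evenChooseSum (x : R) (w : ℕ → R) (n : ℕ) : R :=
  ∑ p ∈ antidiagonal n, w p.1 * x ^ p.2 * ((2 * p.1 + p.2).choose (2 * p.1) : R)

def oddChooseSum (x : R) (w : ℕ → R) (n : ℕ) : R :=
  ∑ p ∈ antidiagonal n, w p.1 * x ^ p.2 * ((2 * p.1 + p.2 + 1).choose (2 * p.1 + 1) : R)

@[simp]
theorem evenChooseSum_zero (x : R) (w : ℕ → R) : evenChooseSum x w 0 = w 0 := by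
  simp [evenChooseSum]

@[simp]
theorem oddChooseSum_zero (x : R) (w : ℕ → R) : oddChooseSum x w 0 = w 0 := by
  simp [oddChooseSum]

theorem oddChooseSum_add_weight (x : R) (v w : ℕ → R) (n : ℕ) :
    oddChooseSum x (v + w) n = oddChooseSum x v n + oddChooseSum x w n := by
  simp only [oddChooseSum, Pi.add_apply, add_mul, sum_add_distrib]

theorem oddChooseSum_succ (x : R) (w : ℕ → R) (n : ℕ) :
    oddChooseSum x w (n + 1) = evenChooseSum x w (n + 1) + x * oddChooseSum x w n := by
  have pascal (j i : ℕ) :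
      w j * x ^ (i + 1) * ((2 * j + (i + 1) + 1).choose (2 * j + 1) : R) =
        w j * x ^ (i + 1) * ((2 * j + (i + 1)).choose (2 * j) : R) +
          x * (w j * x ^ i * ((2 * j + i + 1).choose (2 * j + 1) : R)) := by
    rw [show 2 * j + (i + 1) + 1 = 2 * j + i + 1 + 1 by ring, Nat.choose_succ_succ,
      show 2 * j + (i + 1) = 2 * j + i + 1 by ring]
    push_cast
    ring
  simp only [oddChooseSum, evenChooseSum, Nat.sum_antidiagonal_succ', pascal, sum_add_distrib,
    mul_sum]
  simp [add_assoc]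

-- The sum on the right is `x * evenChooseSum x w n` without its `j = 0` term, reindexed by `j - 1`.
theorem mul_evenChooseSum (x : R) (w : ℕ → R) (n : ℕ) :
    x * evenChooseSum x w n = w 0 * x ^ (n + 1) +
      ∑ p ∈ antidiagonal n,
        w (p.1 + 1) * x ^ p.2 * ((2 * p.1 + p.2 + 1).choose (2 * p.1 + 2) : R) := by
  cases n with
  | zero => simp [evenChooseSum, mul_comm]
  | succ n =>
    have shift (j i : ℕ) :
        w (j + 1) * x ^ (i + 1) * ((2 * j + (i + 1) + 1).choose (2 * j + 2) : R) =
          x * (w (j + 1) * x ^ i * ((2 * (j + 1) + i).choose (2 * (j + 1)) : R)) := by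
      rw [show 2 * j + (i + 1) + 1 = 2 * (j + 1) + i by ring, show 2 * j + 2 = 2 * (j + 1) by ring]
      ring
    rw [evenChooseSum, Nat.sum_antidiagonal_succ, Nat.sum_antidiagonal_succ']
    simp only [shift, mul_add, mul_sum]
    simp only [pow_succ, mul_zero, zero_add, Nat.choose_zero_right, Nat.cast_one, mul_one,
      pow_zero, add_zero, Nat.choose_succ_self, Nat.cast_zero]
    ring

theorem evenChooseSum_succ (x : R) (w : ℕ → R) (n : ℕ) :
    evenChooseSum x w (n + 1) =
      x * evenChooseSum x w n + oddChooseSum x (fun j => w (j + 1)) n := by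
  have pascal (j i : ℕ) :
      w (j + 1) * x ^ i * ((2 * (j + 1) + i).choose (2 * (j + 1)) : R) =
        w (j + 1) * x ^ i * ((2 * j + i + 1).choose (2 * j + 1) : R) +
          w (j + 1) * x ^ i * ((2 * j + i + 1).choose (2 * j + 2) : R) := by
    rw [show 2 * (j + 1) + i = 2 * j + i + 1 + 1 by ring, show 2 * (j + 1) = 2 * j + 1 + 1 by ring,
      Nat.choose_succ_succ]
    push_cast
    ring
  rw [mul_evenChooseSum, evenChooseSum, Nat.sum_antidiagonal_succ, oddChooseSum]
  simp only [pascal, sum_add_distrib]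
  simp only [mul_zero, zero_add, Nat.choose_zero_right, Nat.cast_one, mul_one]
  ring

end ChooseSums

theorem chooseSums_two_one_closed_form (n : ℕ) :
    3 * evenChooseSum (2 : ℤ) 1 n = 2 * 4 ^ n + 1 ∧
      3 * oddChooseSum (2 : ℤ) 1 n = 4 ^ (n + 1) - 1 := by
  induction n with
  | zero => norm_num
  | succ n ih =>
    have hE : evenChooseSum (2 : ℤ) 1 (n + 1) = 2 * evenChooseSum 2 1 n + oddChooseSum 2 1 n :=
      evenChooseSum_succ 2 1 n
    constructor
    · rw [hE]
      linear_combination 2 * ih.1 + ih.2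
    · rw [oddChooseSum_succ, hE]
      linear_combination 2 * ih.1 + 3 * ih.2

theorem chooseSums_two_natCast_closed_form (n : ℕ) :
    27 * evenChooseSum (2 : ℤ) (fun j => (j : ℤ)) n = (6 * n + 2) * 4 ^ n - 3 * n - 2 ∧
      27 * oddChooseSum (2 : ℤ) (fun j => (j : ℤ)) n = (12 * n - 8) * 4 ^ n + 3 * n + 8 := by
  induction n with
  | zero => norm_num
  | succ n ih =>
    have hw : (fun j : ℕ => ((j + 1 : ℕ) : ℤ)) = (fun j : ℕ => (j : ℤ)) + 1 := by
      ext j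
      push_cast
      rfl
    have hE : evenChooseSum (2 : ℤ) (fun j => (j : ℤ)) (n + 1) =
        2 * evenChooseSum 2 (fun j => (j : ℤ)) n + oddChooseSum 2 (fun j => (j : ℤ)) n +
          oddChooseSum 2 1 n := by
      rw [evenChooseSum_succ, hw, oddChooseSum_add_weight, add_assoc]
    have hO := (chooseSums_two_one_closed_form n).2
    constructor
    · rw [hE]
      push_cast
      linear_combination 2 * ih.1 + ih.2 + 9 * hO
    · rw [oddChooseSum_succ, hE]
      push_cast
      linear_combination 2 * ih.1 + 3 * ih.2 + 9 * hO

theorem evenChooseSum_two_natCast_eq (K : ℕ) :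
    evenChooseSum (2 : ℤ) (fun j => (j : ℤ)) K =
      K + ∑ l ∈ range K, 2 * (l : ℤ) * 2 ^ (K - l - 1) * ((K + l).choose (2 * l) : ℤ) := by
  cases K with
  | zero => simp
  | succ n =>
    rw [evenChooseSum, Nat.sum_antidiagonal_succ', Nat.sum_antidiagonal_eq_sum_range_succ_mk]
    congr 1
    · simp
    · refine sum_congr rfl fun l hl => ?_
      have hln : l ≤ n := mem_range_succ_iff.mp hl
      dsimp only
      rw [show 2 * l + (n - l + 1) = n + 1 + l by omega, show n + 1 - l - 1 = n - l by omega,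
        pow_succ]
      ring

/-- Total "sign change" for even crossing number `c = 2k`: for every `k ≥ 2`,
`27 * ∑_{l=0}^{k-2} 2l * 2^(k-l-2) * C(k+l-1, 2l) = 2 * ((3k-2) * 4^(k-1) - 15k + 14)`. -/
theorem total_sign_change_even (k : ℕ) (hk : 2 ≤ k) :
    27 * ∑ l ∈ Finset.range (k - 1),
        (2 * (l : ℤ)) * 2 ^ (k - l - 2) * (Nat.choose (k + l - 1) (2 * l) : ℤ)
      = 2 * ((3 * (k : ℤ) - 2) * 4 ^ (k - 1) - 15 * (k : ℤ) + 14) := by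
  obtain ⟨K, rfl⟩ : ∃ K, k = K + 1 := ⟨k - 1, by omega⟩
  have hexp (l : ℕ) : K + 1 - l - 2 = K - l - 1 := by omega
  have htop (l : ℕ) : K + 1 + l - 1 = K + l := by omega
  have hsum := evenChooseSum_two_natCast_eq K
  have hclosed := (chooseSums_two_natCast_closed_form K).1
  simp only [Nat.add_sub_cancel, hexp, htop]
  push_cast
  linear_combination hclosed - 27 * hsum
end

section
/- For every integer k ≥ 1, the identity ∑_{l=0}^{k-1} (2l+1) · 2^{k−l−1} · C(k+l, 2l+1) = (1/27)·((6k−1)·4^k + 6k + 1) holds; equivalently, 27·∑_{l=0}^{k-1} (2l+1) · 2^{k−l−1} · C(k+l, 2l+1) = (6k−1)·4^k + 6k + 1. -/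
/-!
Write `u_k(f) = ∑_{l+m=k} f(l) 2^m C(2l+m, 2l)` and `v_k(f) = ∑_{l+m=k} f(l) 2^m C(2l+m, 2l+1)`;
the sum in question is `v_k(2l+1) / 2`. Pascal's rule, applied after peeling off the last or the
first term of the antidiagonal, gives `v_{k+1}(f) = 2 (u_k(f) + v_k(f))` and
`2 u_{k+1}(f) = v_{k+1}(f(· + 1)) + 4 u_k(f)`. For `f = 1` and `f = 2l+1` (whose shift is
`f + 2`) this is a linear recurrence system in which closed forms are verified by induction.
-/

open Finset Finset.Nat

-- `u_k(f)` and `v_k(f)` are `chooseSum 0 0 f k` and `chooseSum 0 1 f k`; the offset `d` keeps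
-- Pascal's rule and the index shift inside the family.
def chooseSum (d c : ℕ) (f : ℕ → ℤ) (k : ℕ) : ℤ :=
  ∑ p ∈ antidiagonal k, f p.1 * 2 ^ p.2 * ((2 * p.1 + p.2 + d).choose (2 * p.1 + c) : ℤ)

theorem chooseSum_eq_sum_range (d c : ℕ) (f : ℕ → ℤ) (k : ℕ) :
    chooseSum d c f k
      = ∑ l ∈ range (k + 1), f l * 2 ^ (k - l) * ((k + l + d).choose (2 * l + c) : ℤ) := by
  rw [chooseSum, sum_antidiagonal_eq_sum_range_succ
    (fun l m => f l * 2 ^ m * ((2 * l + m + d).choose (2 * l + c) : ℤ))]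
  refine sum_congr rfl fun l hl => ?_
  rw [show 2 * l + (k - l) = k + l by grind]

theorem chooseSum_add_const (d c : ℕ) (f : ℕ → ℤ) (a : ℤ) (k : ℕ) :
    chooseSum d c (fun l => f l + a) k = chooseSum d c f k + a * chooseSum d c (fun _ => 1) k := by
  simp only [chooseSum, mul_sum, ← sum_add_distrib]
  exact sum_congr rfl fun _ _ => by ring

theorem chooseSum_succ_succ (d c : ℕ) (f : ℕ → ℤ) (k : ℕ) :
    chooseSum (d + 1) (c + 1) f k = chooseSum d c f k + chooseSum d (c + 1) f k := by
  simp only [chooseSum, ← sum_add_distrib]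
  refine sum_congr rfl fun p _ => ?_
  rw [← add_assoc, ← add_assoc, Nat.choose_succ_succ']
  push_cast
  ring

theorem chooseSum_succ_of_lt {d c : ℕ} (hdc : d < c) (f : ℕ → ℤ) (k : ℕ) :
    chooseSum d c f (k + 1) = 2 * chooseSum (d + 1) c f k := by
  rw [chooseSum, sum_antidiagonal_succ', Nat.choose_eq_zero_of_lt (by omega), chooseSum, mul_sum]
  simp only [Nat.cast_zero, mul_zero, zero_add]
  refine sum_congr rfl fun p _ => ?_
  rw [show 2 * p.1 + (p.2 + 1) + d = 2 * p.1 + p.2 + (d + 1) by ring]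
  ring

theorem chooseSum_succ_eq_head_add (d c : ℕ) (f : ℕ → ℤ) (k : ℕ) :
    chooseSum d c f (k + 1)
      = f 0 * 2 ^ (k + 1) * ((k + 1 + d).choose c : ℤ)
        + chooseSum (d + 2) (c + 2) (fun l => f (l + 1)) k := by
  rw [chooseSum, sum_antidiagonal_succ, chooseSum]
  simp only [mul_zero, zero_add]
  refine congrArg _ (sum_congr rfl fun p _ => ?_)
  rw [show 2 * (p.1 + 1) + p.2 + d = 2 * p.1 + p.2 + (d + 2) by ring,
    show 2 * (p.1 + 1) + c = 2 * p.1 + (c + 2) by ring]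

theorem chooseSum_zero_one_succ (f : ℕ → ℤ) (k : ℕ) :
    chooseSum 0 1 f (k + 1) = 2 * (chooseSum 0 0 f k + chooseSum 0 1 f k) := by
  rw [chooseSum_succ_of_lt zero_lt_one]
  exact congrArg _ (chooseSum_succ_succ 0 0 f k)

theorem chooseSum_one_two_eq (f : ℕ → ℤ) (k : ℕ) :
    chooseSum 1 2 (fun l => f (l + 1)) k = 2 * (chooseSum 0 0 f k - f 0 * 2 ^ k) := by
  rcases k with _ | n
  · simp [chooseSum]
  · rw [chooseSum_succ_of_lt one_lt_two, chooseSum_succ_eq_head_add]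
    simp

theorem two_mul_chooseSum_zero_zero_succ (f : ℕ → ℤ) (k : ℕ) :
    2 * chooseSum 0 0 f (k + 1)
      = chooseSum 0 1 (fun l => f (l + 1)) (k + 1) + 4 * chooseSum 0 0 f k := by
  rw [chooseSum_succ_eq_head_add, chooseSum_succ_of_lt zero_lt_one,
    chooseSum_succ_succ 1 1, chooseSum_one_two_eq]
  simp only [Nat.choose_zero_right, Nat.cast_one, mul_one]
  ring

theorem chooseSum_one_closed_form (k : ℕ) :
    3 * chooseSum 0 0 (fun _ => 1) k = 2 * 4 ^ k + 1 ∧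
      3 * chooseSum 0 1 (fun _ => 1) k = 2 * 4 ^ k - 2 := by
  induction k with
  | zero => simp [chooseSum]
  | succ k ih =>
    have hv := chooseSum_zero_one_succ (fun _ => 1) k
    have hu := two_mul_chooseSum_zero_zero_succ (fun _ => 1) k
    rw [pow_succ]
    constructor <;> linarith [ih.1, ih.2]

theorem chooseSum_odd_closed_form (k : ℕ) :
    27 * chooseSum 0 0 (fun l => 2 * l + 1) k = (12 * k + 22) * 4 ^ k - 6 * k + 5 ∧
      27 * chooseSum 0 1 (fun l => 2 * l + 1) k = 2 * ((6 * k - 1) * 4 ^ k + 6 * k + 1) := by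
  induction k with
  | zero => simp [chooseSum]
  | succ k ih =>
    have hshift :
        (fun l : ℕ => 2 * ((l + 1 : ℕ) : ℤ) + 1) = fun l : ℕ => (2 * (l : ℤ) + 1) + 2 := by
      funext l
      push_cast
      ring
    have hv := chooseSum_zero_one_succ (fun l => 2 * l + 1) k
    have hu := two_mul_chooseSum_zero_zero_succ (fun l => 2 * l + 1) k
    rw [hshift, chooseSum_add_const 0 1 (fun l => 2 * l + 1) 2] at hu
    have h1 := (chooseSum_one_closed_form (k + 1)).2
    rw [pow_succ] at h1 ⊢
    push_cast
    constructor <;> linarith [ih.1, ih.2]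

theorem first_sum_odd_general (k : ℕ) :
    27 * ∑ l ∈ Finset.range k,
        (2 * (l : ℤ) + 1) * 2 ^ (k - l - 1) * (Nat.choose (k + l) (2 * l + 1) : ℤ)
      = (6 * (k : ℤ) - 1) * 4 ^ k + 6 * (k : ℤ) + 1 := by
  rcases k with _ | n
  · simp
  have h := (chooseSum_odd_closed_form (n + 1)).2
  rw [chooseSum_succ_of_lt zero_lt_one, chooseSum_eq_sum_range, zero_add] at h
  have hsum : ∑ l ∈ range (n + 1),
        (2 * (l : ℤ) + 1) * 2 ^ (n + 1 - l - 1) * ((n + 1 + l).choose (2 * l + 1) : ℤ)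
      = ∑ l ∈ range (n + 1),
        (2 * (l : ℤ) + 1) * 2 ^ (n - l) * ((n + l + 1).choose (2 * l + 1) : ℤ) :=
    sum_congr rfl fun l _ => by rw [show n + 1 - l - 1 = n - l by omega, add_right_comm]
  rw [hsum]
  linarith

/-- First sum in the odd crossing number case: for every `k ≥ 1`,
`27 * ∑_{l=0}^{k-1} (2l+1) * 2^(k-l-1) * C(k+l, 2l+1) = (6k-1) * 4^k + 6k + 1`. -/
theorem first_sum_odd (k : ℕ) (hk : 1 ≤ k) :
    27 * ∑ l ∈ Finset.range k,
        (2 * (l : ℤ) + 1) * 2 ^ (k - l - 1) * (Nat.choose (k + l) (2 * l + 1) : ℤ)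
      = (6 * (k : ℤ) - 1) * 4 ^ k + 6 * (k : ℤ) + 1 :=
  first_sum_odd_general k
end

section
/- For every integer n ≥ 1, the identity ∑_{p=0}^{n-1} (4p+3) · 2^{n−p−1} · C(n+p, 2p+1) = (1/27)·((12n+7)·4^n + 12n − 7) holds; equivalently, 27·∑_{p=0}^{n-1} (4p+3) · 2^{n−p−1} · C(n+p, 2p+1) = (12n+7)·4^n + 12n − 7. -/
/-!
Write `S w n = ∑ₚ w p 2^(n-p-1) C(n+p, 2p+1)` and `U w n = ∑ₚ w p 2^(n-p) C(n+p, 2p)`.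
Pascal's rule gives the coupled recurrences `S w (n+1) = 2 S w n + U w n` and
`U w (n+1) = S (w ∘ succ) (n+1) + 2 U w n`. For the weight `w p = 4p + 3` the shifted weight is
`w + 4`, so the recurrences close up on the four sums with weights `1` and `4p + 3`, and their
closed forms follow by a simultaneous induction.
-/

open Finset

namespace ChooseWeightedSum

def oddSum (w : ℕ → ℤ) (n : ℕ) : ℤ :=
  ∑ p ∈ range (n + 1), w p * 2 ^ (n - p - 1) * ((n + p).choose (2 * p + 1) : ℤ)

def evenSum (w : ℕ → ℤ) (n : ℕ) : ℤ :=
  ∑ p ∈ range (n + 1), w p * 2 ^ (n - p) * ((n + p).choose (2 * p) : ℤ)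

/-- Truncated subtraction in the exponent is harmless: the binomial vanishes when `n ≤ p`. -/
lemma two_mul_pow_mul_choose_odd (n p : ℕ) :
    2 * (2 : ℤ) ^ (n - p - 1) * ((n + p).choose (2 * p + 1) : ℤ)
      = 2 ^ (n - p) * ((n + p).choose (2 * p + 1) : ℤ) := by
  rcases lt_or_ge p n with h | h
  · rw [← pow_succ', show n - p - 1 + 1 = n - p by omega]
  · simp [Nat.choose_eq_zero_of_lt (show n + p < 2 * p + 1 by omega)]

lemma two_mul_pow_mul_choose_even (n p : ℕ) :
    2 * (2 : ℤ) ^ (n - p) * ((n + p).choose (2 * p) : ℤ)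
      = 2 ^ (n + 1 - p) * ((n + p).choose (2 * p) : ℤ) := by
  rcases le_or_gt p n with h | h
  · rw [← pow_succ', show n - p + 1 = n + 1 - p by omega]
  · simp [Nat.choose_eq_zero_of_lt (show n + p < 2 * p by omega)]

lemma oddSum_eq_sum_range (w : ℕ → ℤ) (n : ℕ) :
    oddSum w n = ∑ p ∈ range n, w p * 2 ^ (n - p - 1) * ((n + p).choose (2 * p + 1) : ℤ) := by
  rw [oddSum, sum_range_succ, Nat.choose_eq_zero_of_lt (by omega : n + n < 2 * n + 1)]
  simp

lemma oddSum_add_mul (v u : ℕ → ℤ) (c : ℤ) (n : ℕ) :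
    oddSum (fun p => v p + c * u p) n = oddSum v n + c * oddSum u n := by
  simp only [oddSum, mul_sum, ← sum_add_distrib]
  exact sum_congr rfl fun p _ => by ring

lemma oddSum_succ (w : ℕ → ℤ) (n : ℕ) :
    oddSum w (n + 1) = 2 * oddSum w n + evenSum w n := by
  rw [oddSum, sum_range_succ,
    Nat.choose_eq_zero_of_lt (by omega : n + 1 + (n + 1) < 2 * (n + 1) + 1), Nat.cast_zero, mul_zero, add_zero, oddSum, evenSum, mul_sum, ← sum_add_distrib]
  refine sum_congr rfl fun p _ => ?_
  rw [show n + 1 - p - 1 = n - p by omega, show n + 1 + p = n + p + 1 by omega,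
    Nat.choose_succ_succ', Nat.cast_add]
  linear_combination (-w p) * two_mul_pow_mul_choose_odd n p

lemma evenSum_succ (w : ℕ → ℤ) (n : ℕ) :
    evenSum w (n + 1) = oddSum (fun p => w (p + 1)) (n + 1) + 2 * evenSum w n := by
  have hdouble : 2 * evenSum w n
      = ∑ p ∈ range (n + 2), w p * 2 ^ (n + 1 - p) * ((n + p).choose (2 * p) : ℤ) := by
    rw [sum_range_succ, Nat.choose_eq_zero_of_lt (by omega : n + (n + 1) < 2 * (n + 1)),
      Nat.cast_zero, mul_zero, add_zero, evenSum, mul_sum]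
    refine sum_congr rfl fun p _ => ?_
    linear_combination (w p) * two_mul_pow_mul_choose_even n p
  rw [hdouble, evenSum, oddSum_eq_sum_range, sum_range_succ' _ (n + 1), sum_range_succ' _ (n + 1),
    ← add_assoc, ← sum_add_distrib]
  congr 1
  · refine sum_congr rfl fun p _ => ?_
    rw [show n + 1 + (p + 1) = n + 1 + p + 1 by omega, show 2 * (p + 1) = 2 * p + 1 + 1 by omega,
      Nat.choose_succ_succ', Nat.cast_add, show n + 1 - p - 1 = n + 1 - (p + 1) by omega,
      show n + (p + 1) = n + 1 + p by omega]
    ring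
  · simp

lemma oddSum_one_and_evenSum_one (n : ℕ) :
    3 * oddSum (fun _ => 1) n = 4 ^ n - 1 ∧ 3 * evenSum (fun _ => 1) n = 2 * 4 ^ n + 1 := by
  induction n with
  | zero => simp [oddSum, evenSum]
  | succ n ih =>
    obtain ⟨ihodd, iheven⟩ := ih
    have hodd : 3 * oddSum (fun _ => 1) (n + 1) = 4 ^ (n + 1) - 1 := by
      rw [oddSum_succ, pow_succ]
      linarith
    refine ⟨hodd, ?_⟩
    rw [evenSum_succ, pow_succ]
    rw [pow_succ] at hodd
    linarith

lemma oddSum_linear_and_evenSum_linear (n : ℕ) :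
    27 * oddSum (fun p => 4 * (p : ℤ) + 3) n = (12 * (n : ℤ) + 7) * 4 ^ n + 12 * (n : ℤ) - 7 ∧
      27 * evenSum (fun p => 4 * (p : ℤ) + 3) n
        = (24 * (n : ℤ) + 62) * 4 ^ n - 12 * (n : ℤ) + 19 := by
  induction n with
  | zero => simp [oddSum, evenSum]
  | succ n ih =>
    obtain ⟨ihodd, iheven⟩ := ih
    obtain ⟨hone, -⟩ := oddSum_one_and_evenSum_one (n + 1)
    have hodd : 27 * oddSum (fun p => 4 * (p : ℤ) + 3) (n + 1)
        = (12 * ((n + 1 : ℕ) : ℤ) + 7) * 4 ^ (n + 1) + 12 * ((n + 1 : ℕ) : ℤ) - 7 := by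
      rw [oddSum_succ, pow_succ]
      push_cast
      linarith
    have hshift : (fun p : ℕ => 4 * ((p + 1 : ℕ) : ℤ) + 3)
        = fun p : ℕ => (4 * (p : ℤ) + 3) + 4 * 1 := by
      funext p
      push_cast
      ring
    refine ⟨hodd, ?_⟩
    rw [evenSum_succ, hshift, oddSum_add_mul, pow_succ]
    rw [pow_succ] at hodd hone
    push_cast at hodd hone ⊢
    linarith

end ChooseWeightedSum

open ChooseWeightedSum in
theorem second_sum_one_mod_four_general (n : ℕ) :
    27 * ∑ p ∈ Finset.range n,
        (4 * (p : ℤ) + 3) * 2 ^ (n - p - 1) * (Nat.choose (n + p) (2 * p + 1) : ℤ)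
      = (12 * (n : ℤ) + 7) * 4 ^ n + 12 * (n : ℤ) - 7 := by
  rw [← oddSum_eq_sum_range]
  exact (oddSum_linear_and_evenSum_linear n).1

/-- Second sum in the case `c ≡ 1 (mod 4)` (`k = 2n`): for every `n ≥ 1`,
`27 * ∑_{p=0}^{n-1} (4p+3) * 2^(n-p-1) * C(n+p, 2p+1) = (12n+7) * 4^n + 12n - 7`. -/
theorem second_sum_one_mod_four (n : ℕ) (hn : 1 ≤ n) :
    27 * ∑ p ∈ Finset.range n,
        (4 * (p : ℤ) + 3) * 2 ^ (n - p - 1) * (Nat.choose (n + p) (2 * p + 1) : ℤ)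
      = (12 * (n : ℤ) + 7) * 4 ^ n + 12 * (n : ℤ) - 7 :=
  second_sum_one_mod_four_general n
end

section
/- For every integer n ≥ 0, the identity ∑_{p=0}^{n} (4p+1) · 2^{n−p} · C(n+p, 2p) = (1/27)·((24n+26)·4^n − 12n + 1) holds; equivalently, 27·∑_{p=0}^{n} (4p+1) · 2^{n−p} · C(n+p, 2p) = (24n+26)·4^n − 12n + 1. -/
/-!
Substituting `(a, b) = (n + p, n - p)` turns the sum into the sum of `(4n + 1 - 4b) 2^b C(a, b)`
along the diagonal `a + b = 2n` of Pascal's triangle. By Pascal's rule the diagonal sums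
`G m = ∑_{a+b=m} 2^b C(a, b)` satisfy `G (m + 2) = G (m + 1) + 2 G m`, and the `b`-weighted
sums `H m` satisfy the same recurrence with the extra term `2 G m`. The characteristic roots
`2` and `-1` give `3 G m = 2^(m+1) + (-1)^m` and `27 H m = (6m - 2) 2^m + (6m + 2) (-1)^m`,
and the sum is `(4n + 1) G (2n) - 4 H (2n)`.
-/

open Finset

section DiagonalSum

variable {R : Type*} [CommSemiring R]

def diagonalSum (w : ℕ → R) (x : R) (m : ℕ) : R :=
  ∑ ij ∈ antidiagonal m, w ij.2 * x ^ ij.2 * (ij.1.choose ij.2 : R)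

theorem diagonalSum_add_two (w : ℕ → R) (x : R) (m : ℕ) :
    diagonalSum w x (m + 2) =
      diagonalSum w x (m + 1) + x * diagonalSum (fun b => w (b + 1)) x m := by
  simp only [diagonalSum, Nat.antidiagonal_succ_succ', Nat.antidiagonal_succ', sum_cons, sum_map,
    Function.Embedding.coe_prodMap, Function.Embedding.coeFn_mk, Prod.map_fst, Prod.map_snd,
    Function.Embedding.refl_apply, Nat.succ_eq_add_one, Nat.choose_succ_succ',
    Nat.choose_zero_succ, Nat.choose_zero_right, Nat.cast_add, mul_add, sum_add_distrib, mul_sum]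
  ring_nf

theorem diagonalSum_affine (c d x : R) (m : ℕ) :
    diagonalSum (fun b => c + d * b) x m =
      c * diagonalSum 1 x m + d * diagonalSum Nat.cast x m := by
  simp only [diagonalSum, mul_sum, ← sum_add_distrib, Pi.one_apply]
  exact sum_congr rfl fun _ _ => by ring

end DiagonalSum

theorem three_mul_diagonalSum_one_two (m : ℕ) :
    3 * diagonalSum (1 : ℕ → ℤ) 2 m = 2 ^ (m + 1) + (-1) ^ m := by
  induction m using Nat.twoStepInduction with
  | zero => decide
  | one => decide
  | more m ih ih' =>
    rw [diagonalSum_add_two, show (fun b => (1 : ℕ → ℤ) (b + 1)) = 1 from rfl]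
    linear_combination ih' + 2 * ih

theorem twentySeven_mul_diagonalSum_natCast_two (m : ℕ) :
    27 * diagonalSum (Nat.cast : ℕ → ℤ) 2 m = (6 * m - 2) * 2 ^ m + (6 * m + 2) * (-1) ^ m := by
  induction m using Nat.twoStepInduction with
  | zero => decide
  | one => decide
  | more m ih ih' =>
    have hshift : (fun b : ℕ => ((b + 1 : ℕ) : ℤ)) = fun b : ℕ => (1 : ℤ) + 1 * (b : ℤ) := by
      ext b; push_cast; ring
    rw [diagonalSum_add_two, hshift, diagonalSum_affine]
    push_cast at ih' ⊢
    linear_combination ih' + 2 * ih + 18 * three_mul_diagonalSum_one_two m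

theorem sum_antidiagonal_two_mul_eq_sum_range {M : Type*} [AddCommMonoid M] (f : ℕ × ℕ → M)
    (hf : ∀ ij : ℕ × ℕ, ij.1 < ij.2 → f ij = 0) (n : ℕ) :
    ∑ ij ∈ antidiagonal (2 * n), f ij = ∑ p ∈ range (n + 1), f (n + p, n - p) := by
  rw [Nat.sum_antidiagonal_eq_sum_range_succ_mk,
    ← sum_range_add_sum_Ico _ (by omega : n ≤ 2 * n + 1),
    sum_eq_zero fun k hk => hf _ (by simp at hk; omega), zero_add, sum_Ico_eq_sum_range,
    show 2 * n + 1 - n = n + 1 by omega]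
  exact sum_congr rfl fun p _ => by congr 2; omega

/-- Second sum in the case `c ≡ 3 (mod 4)` (`k = 2n+1`): for every `n ≥ 0`,
`27 * ∑_{p=0}^{n} (4p+1) * 2^(n-p) * C(n+p, 2p) = (24n+26) * 4^n - 12n + 1`. -/
theorem second_sum_three_mod_four (n : ℕ) :
    27 * ∑ p ∈ Finset.range (n + 1),
        (4 * (p : ℤ) + 1) * 2 ^ (n - p) * (Nat.choose (n + p) (2 * p) : ℤ)
      = (24 * (n : ℤ) + 26) * 4 ^ n - 12 * (n : ℤ) + 1 := by
  have hsum : ∑ p ∈ range (n + 1), (4 * (p : ℤ) + 1) * 2 ^ (n - p) * ((n + p).choose (2 * p) : ℤ)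
      = diagonalSum (fun b => (4 * n + 1 : ℤ) + (-4) * b) 2 (2 * n) := by
    rw [diagonalSum, sum_antidiagonal_two_mul_eq_sum_range _
      (fun ij h => by simp [Nat.choose_eq_zero_of_lt h])]
    refine sum_congr rfl fun p hmem => ?_
    have hp : p ≤ n := Nat.lt_succ_iff.mp (mem_range.mp hmem)
    rw [Nat.choose_symm_of_eq_add (by omega : n + p = 2 * p + (n - p)), Nat.cast_sub hp]
    ring
  rw [hsum, diagonalSum_affine]
  have hG := three_mul_diagonalSum_one_two (2 * n)
  have hH := twentySeven_mul_diagonalSum_natCast_two (2 * n)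
  rw [pow_succ] at hG
  rw [pow_mul, (even_two_mul n).neg_one_pow] at hG hH
  push_cast at hG hH
  linear_combination (4 * n + 1) * 9 * hG - 4 * hH
end

section
/- Let m ≥ 1 and let a = (a_1, …, a_{2m}) be a sequence of nonzero integers. Then B(a) = 3 if and only if one of the following holds: (type 3a) there exists an index i_0 with |a_{i_0}| = 2, |a_i| = 1 for all i ≠ i_0, and a_i · a_{i+1} < 0 for all 1 ≤ i ≤ 2m−1; or (type 3b) |a_i| = 1 for all i and there exists an index i_0 with a_{i_0} · a_{i_0+1} > 0 and a_i · a_{i+1} < 0 for all i ≠ i_0, 1 ≤ i ≤ 2m−1. -/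
/-- The number of sign changes of the sequence `a 0, a 1, …, a (N-1)`:
the number of indices `i` with `0 ≤ i ≤ N - 2` and `a i * a (i+1) < 0`. -/
def signChanges (N : ℕ) (a : ℕ → ℤ) : ℕ :=
  ((Finset.range (N - 1)).filter (fun i => a i * a (i + 1) < 0)).card

/-- The braid index `B(a) = (∑ |a i|) - t(a) + 1` of the sequence `a 0, …, a (N-1)`;
for a reduced even continued fraction `(2 a 0, …, 2 a (2m-1))` this is the braid index
of the corresponding two-bridge knot. -/
def braidB (N : ℕ) (a : ℕ → ℤ) : ℤ :=
  (∑ i ∈ Finset.range N, |a i|) - (signChanges N a : ℤ) + 1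

/-! Write `|a i| = 1 + e i` with `e i ≥ 0`, and sort the `N - 1` adjacent pairs into sign
changes and sign permanences. For `N ≥ 1` this gives `B(a) = ∑ e i + #permanences + 2`, so
`B(a) = 3` exactly when one of these nonnegative integer defects equals `1` and all others vanish:
either a single entry has absolute value `2` (type 3a), or a single adjacent pair keeps its sign,
i.e. has positive product since the entries are nonzero (type 3b). -/

open Finset

namespace Finset

variable {ι : Type*} {s : Finset ι}

theorem sum_eq_one_iff_of_nonneg {f : ι → ℤ} (hf : ∀ i ∈ s, 0 ≤ f i) :
    ∑ i ∈ s, f i = 1 ↔ ∃ j ∈ s, f j = 1 ∧ ∀ i ∈ s, i ≠ j → f i = 0 := by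
  classical
  constructor
  · intro h
    obtain ⟨j, hj, hpos⟩ : ∃ j ∈ s, 0 < f j := by
      by_contra! hnonpos
      linarith [sum_nonpos hnonpos]
    have hrest_nonneg : ∀ i ∈ s.erase j, 0 ≤ f i := fun i hi => hf i (mem_of_mem_erase hi)
    have hsplit := add_sum_erase s f hj
    have hrest : ∑ i ∈ s.erase j, f i = 0 := by linarith [sum_nonneg hrest_nonneg]
    refine ⟨j, hj, by linarith, fun i hi hij => ?_⟩
    exact (sum_eq_zero_iff_of_nonneg hrest_nonneg).mp hrest i (mem_erase.mpr ⟨hij, hi⟩)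
  · rintro ⟨j, hj, hfj, hzero⟩
    rw [sum_eq_single_of_mem j hj hzero, hfj]

theorem card_filter_eq_one_iff {p : ι → Prop} [DecidablePred p] :
    #(s.filter p) = 1 ↔ ∃ j ∈ s, p j ∧ ∀ i ∈ s, i ≠ j → ¬ p i := by
  simp only [card_eq_one, eq_singleton_iff_unique_mem, mem_filter]
  grind

end Finset

def absExcess (N : ℕ) (a : ℕ → ℤ) : ℤ :=
  ∑ i ∈ range N, (|a i| - 1)

def signPermanences (N : ℕ) (a : ℕ → ℤ) : ℕ :=
  ((range (N - 1)).filter (fun i => 0 ≤ a i * a (i + 1))).card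

variable {N : ℕ} {a : ℕ → ℤ}

theorem signChanges_add_signPermanences :
    signChanges N a + signPermanences N a = N - 1 := by
  simp only [signChanges, signPermanences, ← not_lt]
  rw [card_filter_add_card_filter_not, card_range]

theorem braidB_eq_absExcess_add_signPermanences (hN : 1 ≤ N) :
    braidB N a = absExcess N a + signPermanences N a + 2 := by
  have h := signChanges_add_signPermanences (N := N) (a := a)
  simp only [braidB, absExcess, sum_sub_distrib, sum_const, card_range, nsmul_eq_mul, mul_one]
  omega

theorem signPermanences_eq_zero_iff :
    signPermanences N a = 0 ↔ ∀ i < N - 1, a i * a (i + 1) < 0 := by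
  simp [signPermanences]

theorem abs_sub_one_nonneg_on_range (ha : ∀ i < N, a i ≠ 0) :
    ∀ i ∈ range N, 0 ≤ |a i| - 1 :=
  fun i hi => sub_nonneg.mpr (Int.one_le_abs (ha i (mem_range.mp hi)))

theorem absExcess_nonneg (ha : ∀ i < N, a i ≠ 0) : 0 ≤ absExcess N a :=
  sum_nonneg (abs_sub_one_nonneg_on_range ha)

theorem absExcess_eq_zero_iff (ha : ∀ i < N, a i ≠ 0) :
    absExcess N a = 0 ↔ ∀ i < N, |a i| = 1 := by
  rw [absExcess, sum_eq_zero_iff_of_nonneg (abs_sub_one_nonneg_on_range ha)]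
  simp only [mem_range, sub_eq_zero]

theorem absExcess_eq_one_iff (ha : ∀ i < N, a i ≠ 0) :
    absExcess N a = 1 ↔ ∃ i₀ < N, |a i₀| = 2 ∧ ∀ i < N, i ≠ i₀ → |a i| = 1 := by
  rw [absExcess, sum_eq_one_iff_of_nonneg (abs_sub_one_nonneg_on_range ha)]
  simp only [mem_range, sub_eq_zero]
  grind

theorem signPermanences_eq_one_iff (ha : ∀ i < N, a i ≠ 0) :
    signPermanences N a = 1 ↔
      ∃ i₀ < N - 1, 0 < a i₀ * a (i₀ + 1) ∧
        ∀ i < N - 1, i ≠ i₀ → a i * a (i + 1) < 0 := by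
  have hprod : ∀ i < N - 1, a i * a (i + 1) ≠ 0 := fun i hi =>
    mul_ne_zero (ha i (by omega)) (ha (i + 1) (by omega))
  rw [signPermanences, card_filter_eq_one_iff]
  simp only [mem_range, not_le]
  grind

/-- Lemma 4.4: a two-bridge knot with reduced even continued fraction
`(2a_1, …, 2a_{2m})` has braid index `3` if and only if it is of type `3a` or
of type `3b`. -/
theorem braid_index_eq_three_iff (m : ℕ) (hm : 1 ≤ m) (a : ℕ → ℤ)
    (ha : ∀ i < 2 * m, a i ≠ 0) :
    braidB (2 * m) a = 3 ↔
      -- type 3a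
      (∃ i₀ < 2 * m, |a i₀| = 2 ∧ (∀ i < 2 * m, i ≠ i₀ → |a i| = 1) ∧
        (∀ i < 2 * m - 1, a i * a (i + 1) < 0)) ∨
      -- type 3b
      ((∀ i < 2 * m, |a i| = 1) ∧
        ∃ i₀ < 2 * m - 1, 0 < a i₀ * a (i₀ + 1) ∧
          (∀ i < 2 * m - 1, i ≠ i₀ → a i * a (i + 1) < 0)) := by
  rw [braidB_eq_absExcess_add_signPermanences (by omega)]
  have hexcess := absExcess_nonneg ha
  constructor
  · intro h
    obtain ⟨hE, hP⟩ | ⟨hE, hP⟩ :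
        (absExcess (2 * m) a = 1 ∧ signPermanences (2 * m) a = 0) ∨
          (absExcess (2 * m) a = 0 ∧ signPermanences (2 * m) a = 1) := by omega
    · obtain ⟨i₀, hi₀, htwo, hone⟩ := (absExcess_eq_one_iff ha).mp hE
      exact Or.inl ⟨i₀, hi₀, htwo, hone, signPermanences_eq_zero_iff.mp hP⟩
    · exact Or.inr ⟨(absExcess_eq_zero_iff ha).mp hE, (signPermanences_eq_one_iff ha).mp hP⟩
  · rintro (⟨i₀, hi₀, htwo, hone, halt⟩ | ⟨hone, hperm⟩)
    · rw [(absExcess_eq_one_iff ha).mpr ⟨i₀, hi₀, htwo, hone⟩,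
        signPermanences_eq_zero_iff.mpr halt]
      norm_num
    · rw [(absExcess_eq_zero_iff ha).mpr hone, (signPermanences_eq_one_iff ha).mpr hperm]
      norm_num
end
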